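/- Let x ≠ p and let u : ℝ² → ℝ be differentiable at K(x). Then u∘K is differentiable at x and the operator norms of the Fréchet derivatives satisfy ‖D(u∘K)(x)‖ = (rs/‖x − p‖²) · ‖Du(K(x))‖; equivalently, |∇(u∘K)(x)|² = |∇u(K(x))|² · r²s²/‖x − p‖⁴. -/

import Mathlib

/-!
For `rs ≥ 0` the Kelvin transform is the inversion in the circle of radius `√(rs)` about `p`,
whose derivative at `x` is `rs / ‖x - p‖²` times the reflection in the line orthogonal to
`x - p`. Precomposing a linear functional with a reflection preserves its norm, so the chain rule
scales the norm of `Du` by exactly `rs / ‖x - p‖²`.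
-/

/-- The Kelvin transform centered at `p` with parameter `r * s`. -/
noncomputable def kelvin (p : EuclideanSpace ℝ (Fin 2)) (r s : ℝ)
    (x : EuclideanSpace ℝ (Fin 2)) : EuclideanSpace ℝ (Fin 2) :=
  p + (r * s / ‖x - p‖ ^ 2) • (x - p)

theorem ContinuousLinearMap.opNorm_comp_smul_linearIsometryEquiv {𝕜 E F G : Type*}
    [NontriviallyNormedField 𝕜] [NormedAddCommGroup E] [NormedAddCommGroup F]
    [NormedAddCommGroup G] [NormedSpace 𝕜 E] [NormedSpace 𝕜 F] [NormedSpace 𝕜 G]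
    (f : F →L[𝕜] G) (c : 𝕜) (e : E ≃ₗᵢ[𝕜] F) :
    ‖f.comp (c • (e : E →L[𝕜] F))‖ = ‖c‖ * ‖f‖ := by
  rw [f.comp_smul, norm_smul, f.opNorm_comp_linearIsometryEquiv]

theorem kelvin_eq_inversion (p : EuclideanSpace ℝ (Fin 2)) {r s : ℝ} (hrs : 0 ≤ r * s) :
    kelvin p r s = EuclideanGeometry.inversion p (√(r * s)) := by
  funext x
  simp only [kelvin, EuclideanGeometry.inversion_def, dist_eq_norm, div_pow,
    Real.sq_sqrt hrs, vsub_eq_sub, vadd_eq_add]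
  abel

theorem hasFDerivAt_kelvin {p : EuclideanSpace ℝ (Fin 2)} {r s : ℝ} (hrs : 0 ≤ r * s)
    {x : EuclideanSpace ℝ (Fin 2)} (hx : x ≠ p) :
    HasFDerivAt (kelvin p r s)
      ((r * s / ‖x - p‖ ^ 2) •
        ((ℝ ∙ (x - p))ᗮ.reflection : EuclideanSpace ℝ (Fin 2) →L[ℝ] EuclideanSpace ℝ (Fin 2)))
      x := by
  have h := EuclideanGeometry.hasFDerivAt_inversion (R := √(r * s)) hx
  rwa [div_pow, Real.sq_sqrt hrs, dist_eq_norm, ← kelvin_eq_inversion p hrs] at h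

theorem kelvin_conformal (p : EuclideanSpace ℝ (Fin 2)) (r s : ℝ)
    (hr : 0 < r) (hs : 0 < s) (x : EuclideanSpace ℝ (Fin 2)) (hx : x ≠ p)
    (u : EuclideanSpace ℝ (Fin 2) → ℝ)
    (hu : DifferentiableAt ℝ u (kelvin p r s x)) :
    DifferentiableAt ℝ (u ∘ kelvin p r s) x ∧
    ‖fderiv ℝ (u ∘ kelvin p r s) x‖ =
      (r * s / ‖x - p‖ ^ 2) * ‖fderiv ℝ u (kelvin p r s x)‖ ∧
    ‖fderiv ℝ (u ∘ kelvin p r s) x‖ ^ 2 =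
      ‖fderiv ℝ u (kelvin p r s x)‖ ^ 2 * (r ^ 2 * s ^ 2 / ‖x - p‖ ^ 4) := by
  have hrs : 0 ≤ r * s := (mul_pos hr hs).le
  have hcomp := hu.hasFDerivAt.comp x (hasFDerivAt_kelvin hrs hx)
  have hnorm : ‖fderiv ℝ (u ∘ kelvin p r s) x‖ =
      (r * s / ‖x - p‖ ^ 2) * ‖fderiv ℝ u (kelvin p r s x)‖ := by
    rw [hcomp.fderiv, ContinuousLinearMap.opNorm_comp_smul_linearIsometryEquiv,
      Real.norm_of_nonneg (by positivity)]
  refine ⟨hcomp.differentiableAt, hnorm, ?_⟩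
  rw [hnorm]
  ring
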